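/- The elements x = ε²+ε̄² and z = εαε̄ᾱ + αε̄ᾱε + ε̄ᾱεα + ᾱεαε̄ are central in E, i.e. x and z commute with every element of E (these are homogeneous elements of even degrees 2 and 4, so this is equivalent to their lying in the graded centre of E). -/

import Mathlib

open FreeAlgebra

inductive Gen : Type | e1 | e2 | ep | eb | al | ab

variable (K : Type) [Field K]

/-- Relations presenting the preprojective algebra `E = KQ/⟨ε²+αᾱ, ε̄²+ᾱα⟩` of type `T̃₂`,
the Ext algebra of the tame Hecke algebra `A`. -/
inductive RelE : FreeAlgebra K Gen → FreeAlgebra K Gen → Prop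
  | sum : RelE (ι K .e1 + ι K .e2) 1
  | idem1 : RelE (ι K .e1 * ι K .e1) (ι K .e1)
  | idem2 : RelE (ι K .e2 * ι K .e2) (ι K .e2)
  | orth12 : RelE (ι K .e1 * ι K .e2) 0
  | orth21 : RelE (ι K .e2 * ι K .e1) 0
  | ep_l : RelE (ι K .e1 * ι K .ep) (ι K .ep)
  | ep_r : RelE (ι K .ep * ι K .e1) (ι K .ep)
  | eb_l : RelE (ι K .e2 * ι K .eb) (ι K .eb)
  | eb_r : RelE (ι K .eb * ι K .e2) (ι K .eb)
  | al_l : RelE (ι K .e1 * ι K .al) (ι K .al)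
  | al_r : RelE (ι K .al * ι K .e2) (ι K .al)
  | ab_l : RelE (ι K .e2 * ι K .ab) (ι K .ab)
  | ab_r : RelE (ι K .ab * ι K .e1) (ι K .ab)
  | rel1 : RelE (ι K .ep * ι K .ep + ι K .al * ι K .ab) 0
  | rel2 : RelE (ι K .eb * ι K .eb + ι K .ab * ι K .al) 0

/-- The preprojective algebra of type `T̃₂`. -/
abbrev PreprojE : Type := RingQuot (RelE K)

namespace PreprojE

noncomputable def of (g : Gen) : PreprojE K := RingQuot.mkAlgHom K (RelE K) (ι K g)

noncomputable abbrev e₁ : PreprojE K := of K .e1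
noncomputable abbrev e₂ : PreprojE K := of K .e2
noncomputable abbrev ε : PreprojE K := of K .ep
noncomputable abbrev εb : PreprojE K := of K .eb
noncomputable abbrev α : PreprojE K := of K .al
noncomputable abbrev αb : PreprojE K := of K .ab

/-- The central element `x = ε² + ε̄²`. -/
noncomputable def x : PreprojE K := ε K ^ 2 + εb K ^ 2

/-- The central element `z = εαε̄ᾱ + αε̄ᾱε + ε̄ᾱεα + ᾱεαε̄`. -/
noncomputable def z : PreprojE K :=
  ε K * α K * εb K * αb K + α K * εb K * αb K * ε K +
    εb K * αb K * ε K * α K + αb K * ε K * α K * εb K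

/-- The 16-element generating set `S`. -/
noncomputable def S : Set (PreprojE K) :=
  {e₁ K, e₂ K, ε K, α K, εb K, αb K, ε K * α K, εb K * αb K, α K * εb K, αb K * ε K,
    ε K * α K * εb K, εb K * αb K * ε K, αb K * ε K * α K, α K * εb K * αb K,
    ε K * α K * εb K * αb K, εb K * αb K * ε K * α K}

end PreprojE

/-!
Put `e = ε + ε̄` and `a = α + ᾱ`. Since `ε = e₁ e` and `α = e₁ a`, the algebra `E` is generated by
`e₁`, `e` and `a`, so it suffices to check that `x` and `z` commute with these three elements. Paths
that do not compose vanish, so the defining relations become `x = e² = -a²`, and moreover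
`z = (ea)² + (ae)²`. Hence `x` commutes with `e` and `a`; and `e` commutes with `e₁` while `a`
interchanges `e₁` and `e₂`, so every word of even length in `e` and `a` commutes with `e₁`. For `z`
it remains to note that in any ring, if `u²` commutes with `v` then `u` commutes with
`(uv)² + (vu)²`; apply this to `(u, v) = (e, a)` and `(a, e)`, using `e² = x = -a²`.
-/

section

variable {R : Type*}

theorem mul_eq_zero_of_orthogonal [SemigroupWithZero R] {a b p q : R} (ha : a * p = a)
    (hb : q * b = b) (hpq : p * q = 0) : a * b = 0 := by
  rw [← ha, ← hb, mul_assoc, ← mul_assoc p, hpq, zero_mul, mul_zero]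

theorem mul_mul_eq_zero_of_mul_eq_zero [SemigroupWithZero R] {a b : R} (h : a * b = 0) (c : R) :
    a * (b * c) = 0 := by
  rw [← mul_assoc, h, zero_mul]

theorem commute_mul_sq_add_mul_sq [Semiring R] {u v : R} (h : Commute (u ^ 2) v) :
    Commute u ((u * v) ^ 2 + (v * u) ^ 2) :=
  have huvu : Commute (u ^ 2) (v * u * v) := (h.mul_right (Commute.self_pow u 2).symm).mul_right h
  calc u * ((u * v) ^ 2 + (v * u) ^ 2) = u ^ 2 * (v * u * v) + (u * v) ^ 2 * u := by
        simp only [sq, mul_add, mul_assoc]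
    _ = v * u * v * u ^ 2 + (u * v) ^ 2 * u := by rw [huvu.eq]
    _ = ((u * v) ^ 2 + (v * u) ^ 2) * u := by
        rw [add_comm]; simp only [sq, add_mul, mul_assoc]

end

theorem RingQuot.adjoin_range_mkAlgHom_ι {R X : Type*} [CommSemiring R]
    (r : FreeAlgebra R X → FreeAlgebra R X → Prop) :
    Algebra.adjoin R (Set.range (RingQuot.mkAlgHom R r ∘ FreeAlgebra.ι R)) = ⊤ := by
  rw [Set.range_comp, Algebra.adjoin_image, FreeAlgebra.adjoin_range_ι, Algebra.map_top,
    AlgHom.range_eq_top]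
  exact RingQuot.mkAlgHom_surjective R r

namespace PreprojE

variable {K}

theorem e₁_add_e₂ : e₁ K + e₂ K = 1 := by
  simpa [of] using RingQuot.mkAlgHom_rel K (RelE.sum (K := K))

theorem e₁_mul_e₁ : e₁ K * e₁ K = e₁ K := by
  simpa [of] using RingQuot.mkAlgHom_rel K (RelE.idem1 (K := K))

theorem e₂_mul_e₂ : e₂ K * e₂ K = e₂ K := by
  simpa [of] using RingQuot.mkAlgHom_rel K (RelE.idem2 (K := K))

theorem e₁_mul_e₂ : e₁ K * e₂ K = 0 := by
  simpa [of] using RingQuot.mkAlgHom_rel K (RelE.orth12 (K := K))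

theorem e₂_mul_e₁ : e₂ K * e₁ K = 0 := by
  simpa [of] using RingQuot.mkAlgHom_rel K (RelE.orth21 (K := K))

theorem e₁_mul_ε : e₁ K * ε K = ε K := by
  simpa [of] using RingQuot.mkAlgHom_rel K (RelE.ep_l (K := K))

theorem ε_mul_e₁ : ε K * e₁ K = ε K := by
  simpa [of] using RingQuot.mkAlgHom_rel K (RelE.ep_r (K := K))

theorem e₂_mul_εb : e₂ K * εb K = εb K := by
  simpa [of] using RingQuot.mkAlgHom_rel K (RelE.eb_l (K := K))

theorem εb_mul_e₂ : εb K * e₂ K = εb K := by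
  simpa [of] using RingQuot.mkAlgHom_rel K (RelE.eb_r (K := K))

theorem e₁_mul_α : e₁ K * α K = α K := by
  simpa [of] using RingQuot.mkAlgHom_rel K (RelE.al_l (K := K))

theorem α_mul_e₂ : α K * e₂ K = α K := by
  simpa [of] using RingQuot.mkAlgHom_rel K (RelE.al_r (K := K))

theorem e₂_mul_αb : e₂ K * αb K = αb K := by
  simpa [of] using RingQuot.mkAlgHom_rel K (RelE.ab_l (K := K))

theorem αb_mul_e₁ : αb K * e₁ K = αb K := by
  simpa [of] using RingQuot.mkAlgHom_rel K (RelE.ab_r (K := K))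

theorem ε_mul_ε_add_α_mul_αb : ε K * ε K + α K * αb K = 0 := by
  simpa [of] using RingQuot.mkAlgHom_rel K (RelE.rel1 (K := K))

theorem εb_mul_εb_add_αb_mul_α : εb K * εb K + αb K * α K = 0 := by
  simpa [of] using RingQuot.mkAlgHom_rel K (RelE.rel2 (K := K))

theorem e₁_mul_εb : e₁ K * εb K = 0 := mul_eq_zero_of_orthogonal e₁_mul_e₁ e₂_mul_εb e₁_mul_e₂
theorem εb_mul_e₁ : εb K * e₁ K = 0 := mul_eq_zero_of_orthogonal εb_mul_e₂ e₁_mul_e₁ e₂_mul_e₁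
theorem e₁_mul_αb : e₁ K * αb K = 0 := mul_eq_zero_of_orthogonal e₁_mul_e₁ e₂_mul_αb e₁_mul_e₂
theorem e₂_mul_α : e₂ K * α K = 0 := mul_eq_zero_of_orthogonal e₂_mul_e₂ e₁_mul_α e₂_mul_e₁
theorem α_mul_e₁ : α K * e₁ K = 0 := mul_eq_zero_of_orthogonal α_mul_e₂ e₁_mul_e₁ e₂_mul_e₁
theorem ε_mul_εb : ε K * εb K = 0 := mul_eq_zero_of_orthogonal ε_mul_e₁ e₂_mul_εb e₁_mul_e₂
theorem εb_mul_ε : εb K * ε K = 0 := mul_eq_zero_of_orthogonal εb_mul_e₂ e₁_mul_ε e₂_mul_e₁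
theorem ε_mul_αb : ε K * αb K = 0 := mul_eq_zero_of_orthogonal ε_mul_e₁ e₂_mul_αb e₁_mul_e₂
theorem εb_mul_α : εb K * α K = 0 := mul_eq_zero_of_orthogonal εb_mul_e₂ e₁_mul_α e₂_mul_e₁
theorem α_mul_ε : α K * ε K = 0 := mul_eq_zero_of_orthogonal α_mul_e₂ e₁_mul_ε e₂_mul_e₁
theorem αb_mul_εb : αb K * εb K = 0 := mul_eq_zero_of_orthogonal αb_mul_e₁ e₂_mul_εb e₁_mul_e₂
theorem α_mul_α : α K * α K = 0 := mul_eq_zero_of_orthogonal α_mul_e₂ e₁_mul_α e₂_mul_e₁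
theorem αb_mul_αb : αb K * αb K = 0 := mul_eq_zero_of_orthogonal αb_mul_e₁ e₂_mul_αb e₁_mul_e₂

variable (K) in
noncomputable def loops : PreprojE K := ε K + εb K

variable (K) in
noncomputable def arrows : PreprojE K := α K + αb K

theorem e₁_mul_loops : e₁ K * loops K = ε K := by
  rw [loops, mul_add, e₁_mul_ε, e₁_mul_εb, add_zero]

theorem commute_loops_e₁ : Commute (loops K) (e₁ K) := by
  rw [Commute, SemiconjBy, e₁_mul_loops, loops, add_mul, ε_mul_e₁, εb_mul_e₁, add_zero]

theorem commute_loops_e₂ : Commute (loops K) (e₂ K) := by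
  simpa only [← e₁_add_e₂, add_sub_cancel_left] using
    (Commute.one_right (loops K)).sub_right commute_loops_e₁

theorem e₁_mul_arrows : e₁ K * arrows K = α K := by
  rw [arrows, mul_add, e₁_mul_α, e₁_mul_αb, add_zero]

theorem semiconjBy_arrows_e₁_e₂ : SemiconjBy (arrows K) (e₁ K) (e₂ K) := by
  rw [SemiconjBy, arrows, add_mul, mul_add, α_mul_e₁, αb_mul_e₁, e₂_mul_α, e₂_mul_αb]

theorem semiconjBy_arrows_e₂_e₁ : SemiconjBy (arrows K) (e₂ K) (e₁ K) := by
  simpa only [← e₁_add_e₂, add_sub_cancel_left, add_sub_cancel_right] using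
    (SemiconjBy.one_right (arrows K)).sub_right semiconjBy_arrows_e₁_e₂

theorem loops_sq : loops K ^ 2 = x K := by
  rw [loops, x, sq, add_mul, mul_add, mul_add, ε_mul_εb, εb_mul_ε, add_zero, zero_add, sq, sq]

theorem arrows_sq : arrows K ^ 2 = -x K := by
  rw [eq_neg_iff_add_eq_zero]
  calc arrows K ^ 2 + x K
      = (ε K * ε K + α K * αb K) + (εb K * εb K + αb K * α K) := by
        rw [arrows, x, sq, sq, sq, add_mul, mul_add, mul_add, α_mul_α, αb_mul_αb, zero_add,
          add_zero]
        abel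
    _ = 0 := by rw [ε_mul_ε_add_α_mul_αb, εb_mul_εb_add_αb_mul_α, add_zero]

theorem loops_mul_arrows : loops K * arrows K = ε K * α K + εb K * αb K := by
  rw [loops, arrows, add_mul, mul_add, mul_add, ε_mul_αb, εb_mul_α, add_zero, zero_add]

theorem arrows_mul_loops : arrows K * loops K = α K * εb K + αb K * ε K := by
  rw [loops, arrows, add_mul, mul_add, mul_add, α_mul_ε, αb_mul_εb, zero_add, add_zero]

theorem z_eq_sq_add_sq : z K = (loops K * arrows K) ^ 2 + (arrows K * loops K) ^ 2 := by
  rw [loops_mul_arrows, arrows_mul_loops, z]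
  simp only [sq, add_mul, mul_add, mul_assoc, mul_mul_eq_zero_of_mul_eq_zero α_mul_ε,
    mul_mul_eq_zero_of_mul_eq_zero αb_mul_εb, mul_mul_eq_zero_of_mul_eq_zero εb_mul_α,
    mul_mul_eq_zero_of_mul_eq_zero ε_mul_αb, mul_zero, zero_add, add_zero]
  abel

theorem adjoin_e₁_loops_arrows : Algebra.adjoin K {e₁ K, loops K, arrows K} = ⊤ := by
  set A := Algebra.adjoin K {e₁ K, loops K, arrows K}
  have h₁ : e₁ K ∈ A := Algebra.subset_adjoin (by simp)
  have hl : loops K ∈ A := Algebra.subset_adjoin (by simp)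
  have ha : arrows K ∈ A := Algebra.subset_adjoin (by simp)
  have hε : ε K ∈ A := e₁_mul_loops (K := K) ▸ mul_mem h₁ hl
  have hα : α K ∈ A := e₁_mul_arrows (K := K) ▸ mul_mem h₁ ha
  rw [eq_top_iff, ← RingQuot.adjoin_range_mkAlgHom_ι, Algebra.adjoin_le_iff,
    Set.range_subset_iff]
  intro g
  cases g
  · exact h₁
  · show e₂ K ∈ A
    rw [← add_sub_cancel_left (e₁ K) (e₂ K), e₁_add_e₂]
    exact sub_mem (one_mem A) h₁
  · exact hε
  · show εb K ∈ A
    rw [← add_sub_cancel_left (ε K) (εb K)]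
    exact sub_mem hl hε
  · exact hα
  · show αb K ∈ A
    rw [← add_sub_cancel_left (α K) (αb K)]
    exact sub_mem ha hα

theorem commute_of_commute_e₁_loops_arrows {c : PreprojE K} (h₁ : Commute c (e₁ K))
    (hl : Commute c (loops K)) (ha : Commute c (arrows K)) (y : PreprojE K) : Commute c y :=
  Algebra.commute_of_mem_adjoin_of_forall_mem_commute
    (adjoin_e₁_loops_arrows (K := K) ▸ Algebra.mem_top) (by simp [h₁, hl, ha])

theorem commute_x_e₁ : Commute (x K) (e₁ K) := loops_sq (K := K) ▸ commute_loops_e₁.pow_left 2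

theorem commute_x_loops : Commute (x K) (loops K) :=
  loops_sq (K := K) ▸ (Commute.self_pow (loops K) 2).symm

theorem commute_x_arrows : Commute (x K) (arrows K) := by
  simpa only [arrows_sq, neg_neg] using (Commute.self_pow (arrows K) 2).symm.neg_left

theorem commute_z_e₁ : Commute (z K) (e₁ K) := by
  have hla₁ : SemiconjBy (loops K * arrows K) (e₁ K) (e₂ K) :=
    SemiconjBy.mul_left commute_loops_e₂ semiconjBy_arrows_e₁_e₂
  have hla₂ : SemiconjBy (loops K * arrows K) (e₂ K) (e₁ K) :=
    SemiconjBy.mul_left commute_loops_e₁ semiconjBy_arrows_e₂_e₁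
  have hal₁ : SemiconjBy (arrows K * loops K) (e₁ K) (e₂ K) :=
    semiconjBy_arrows_e₁_e₂.mul_left commute_loops_e₁
  have hal₂ : SemiconjBy (arrows K * loops K) (e₂ K) (e₁ K) :=
    semiconjBy_arrows_e₂_e₁.mul_left commute_loops_e₂
  rw [z_eq_sq_add_sq, sq, sq]
  exact (hla₂.mul_left hla₁).add_left (hal₂.mul_left hal₁)

theorem commute_z_loops : Commute (z K) (loops K) :=
  z_eq_sq_add_sq (K := K) ▸ (commute_mul_sq_add_mul_sq (loops_sq (K := K) ▸ commute_x_arrows)).symm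

theorem commute_z_arrows : Commute (z K) (arrows K) := by
  have h : Commute (arrows K ^ 2) (loops K) := arrows_sq (K := K) ▸ commute_x_loops.neg_left
  rw [z_eq_sq_add_sq, add_comm]
  exact (commute_mul_sq_add_mul_sq h).symm

end PreprojE

open PreprojE in
theorem x_z_central_general (K : Type) [Field K] :
    (∀ y : PreprojE K, x K * y = y * x K) ∧ (∀ y : PreprojE K, z K * y = y * z K) :=
  ⟨commute_of_commute_e₁_loops_arrows commute_x_e₁ commute_x_loops commute_x_arrows,
    commute_of_commute_e₁_loops_arrows commute_z_e₁ commute_z_loops commute_z_arrows⟩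

open PreprojE in
/-- `x = ε²+ε̄²` and `z = εαε̄ᾱ + αε̄ᾱε + ε̄ᾱεα + ᾱεαε̄` are central in `E`. -/
theorem x_z_central (K : Type) [Field K] [IsAlgClosed K] :
    (∀ y : PreprojE K, x K * y = y * x K) ∧ (∀ y : PreprojE K, z K * y = y * z K) :=
  x_z_central_general K
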